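/- arXiv:2110.11327 — 4 statements merged into one kernel-verified Lean document; each statement's English description precedes it below -/
import Mathlib

section
/- Let ι, κ, n be finite nonempty types with distinguished elements a₀ : ι and b₀ : κ. Let V_A be a unitary matrix indexed by ι × n over ℂ that block-encodes the matrix A : Matrix n n ℂ, i.e. A i j = V_A (a₀, i) (a₀, j) for all i, j; and let V_B be a unitary matrix indexed by κ × n over ℂ that block-encodes B : Matrix n n ℂ, i.e. B i j = V_B (b₀, i) (b₀, j) for all i, j. Define matrices M₁, M₂ indexed by κ × ι × n by M₁ (b,a,i) (b',a',j) = if b = b' then V_A (a,i) (a',j) else 0, and M₂ (b,a,i) (b',a',j) = if a = a' then V_B (b,i) (b',j) else 0. Then the product M₁ * M₂ is unitary and block-encodes the product A * B, i.e. for all i, j one has (A * B) i j = (M₁ * M₂) (b₀, a₀, i) (b₀, a₀, j). -/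
open Matrix

/-- **Product of block encodings.** If `V_A` (with ancilla `ι`, distinguished `a₀`) block-encodes
`A` and `V_B` (with ancilla `κ`, distinguished `b₀`) block-encodes `B`, then
`(I_κ ⊗ V_A) * (V_B ⊗ I_ι)` is a unitary block encoding of `A * B`. -/
theorem block_encoding_product
    (ι κ n : Type*) [Fintype ι] [Fintype κ] [Fintype n] [Nonempty ι] [Nonempty κ] [Nonempty n]
    [DecidableEq ι] [DecidableEq κ] [DecidableEq n]
    (a₀ : ι) (b₀ : κ)
    (V_A : Matrix (ι × n) (ι × n) ℂ) (V_B : Matrix (κ × n) (κ × n) ℂ)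
    (A B : Matrix n n ℂ)
    (hVAu : V_Aᴴ * V_A = 1) (hVBu : V_Bᴴ * V_B = 1)
    (hA : ∀ i j, A i j = V_A (a₀, i) (a₀, j))
    (hB : ∀ i j, B i j = V_B (b₀, i) (b₀, j))
    (M₁ M₂ : Matrix (κ × ι × n) (κ × ι × n) ℂ)
    (hM₁ : ∀ p q, M₁ p q = if p.1 = q.1 then V_A p.2 q.2 else 0)
    (hM₂ : ∀ p q, M₂ p q = if p.2.1 = q.2.1 then V_B (p.1, p.2.2) (q.1, q.2.2) else 0) :
    (M₁ * M₂)ᴴ * (M₁ * M₂) = 1 ∧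
      ∀ i j, (A * B) i j = (M₁ * M₂) (b₀, a₀, i) (b₀, a₀, j) := by
  have h1 : M₁ᴴ * M₁ = 1 := by
    ext p q
    obtain ⟨pb, pa, pi⟩ := p
    obtain ⟨qb, qa, qi⟩ := q
    simp only [Matrix.mul_apply, conjTranspose_apply, hM₁, Matrix.one_apply]
    rw [Fintype.sum_prod_type]
    by_cases h : pb = qb
    · subst h
      rw [Finset.sum_eq_single pb]
      · have := congrFun (congrFun hVAu (pa, pi)) (qa, qi)
        simp only [Matrix.mul_apply, conjTranspose_apply, Matrix.one_apply,
          Prod.mk.injEq] at this ⊢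
        simpa using this
      · intro c _ hc
        apply Finset.sum_eq_zero
        intro s _
        simp [hc]
      · simp
    · have hpq : ¬ ((pb, pa, pi) = (qb, qa, qi)) := by simp [h]
      rw [if_neg hpq]
      apply Finset.sum_eq_zero
      intro c _
      apply Finset.sum_eq_zero
      intro s _
      by_cases hc : c = pb
      · subst hc
        simp [h]
      · simp [hc]
  have h2 : M₂ᴴ * M₂ = 1 := by
    ext p q
    obtain ⟨pb, pa, pi⟩ := p
    obtain ⟨qb, qa, qi⟩ := q
    simp only [Matrix.mul_apply, conjTranspose_apply, hM₂, Matrix.one_apply]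
    rw [Fintype.sum_prod_type]
    by_cases h : pa = qa
    · subst h
      have key : ∀ c : κ, (∑ s : ι × n,
          star (if s.1 = pa then V_B (c, s.2) (pb, pi) else 0) *
            (if s.1 = pa then V_B (c, s.2) (qb, qi) else 0))
          = ∑ k : n, star (V_B (c, k) (pb, pi)) * V_B (c, k) (qb, qi) := by
        intro c
        rw [Fintype.sum_prod_type]
        rw [Finset.sum_eq_single pa]
        · simp
        · intro a _ ha
          apply Finset.sum_eq_zero
          intro k _
          simp [ha]
        · simp
      simp only [key]
      have := congrFun (congrFun hVBu (pb, pi)) (qb, qi)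
      simp only [Matrix.mul_apply, conjTranspose_apply, Matrix.one_apply,
        Fintype.sum_prod_type, Prod.mk.injEq] at this ⊢
      simpa using this
    · have hpq : ¬ ((pb, pa, pi) = (qb, qa, qi)) := by simp [h]
      rw [if_neg hpq]
      apply Finset.sum_eq_zero
      intro c _
      apply Finset.sum_eq_zero
      intro s _
      by_cases hs : s.1 = pa
      · simp [hs, h]
      · simp [hs]
  constructor
  · rw [conjTranspose_mul, Matrix.mul_assoc, ← Matrix.mul_assoc M₁ᴴ, h1,
      Matrix.one_mul, h2]
  · intro i j
    rw [Matrix.mul_apply, Matrix.mul_apply]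
    rw [Fintype.sum_prod_type]
    rw [Finset.sum_eq_single b₀]
    · rw [Fintype.sum_prod_type]
      rw [Finset.sum_eq_single a₀]
      · apply Finset.sum_congr rfl
        intro k _
        simp [hM₁, hM₂, hA, hB]
      · intro a _ ha
        apply Finset.sum_eq_zero
        intro k _
        simp [hM₂, ha]
      · simp
    · intro c _ hc
      apply Finset.sum_eq_zero
      intro s _
      simp [hM₁, Ne.symm hc]
    · simp
end

section
/- Let n be a finite type, let U : Matrix n n ℂ be unitary, let ε be real with 0 ≤ ε ≤ 3/10, and let A : Matrix n n ℂ satisfy ‖A − U‖ ≤ ε in the L2 operator norm. Then ‖(3/2 : ℂ) • A − (1/2 : ℂ) • (A * Aᴴ * A) − U‖ ≤ (5/2) * ε. (This is the error bound showing that one round of robust oblivious amplitude amplification, which effects A ↦ (3/2)A − (1/2)AAᴴA, yields an O(ε)-approximation of the unitary U when A is an ε-approximate half-encoding amplified threefold.) -/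
open Matrix
open scoped Matrix.Norms.L2Operator

private lemma unitary_mul_norm {n : Type*} [Fintype n] [DecidableEq n]
    (V X : Matrix n n ℂ) (hV : Vᴴ * V = 1) : ‖V * X‖ = ‖X‖ := by
  have h := Matrix.l2_opNorm_conjTranspose_mul_self (V * X)
  rw [conjTranspose_mul, Matrix.mul_assoc, ← Matrix.mul_assoc Vᴴ V X, hV,
    Matrix.one_mul, Matrix.l2_opNorm_conjTranspose_mul_self] at h
  exact (mul_self_inj (norm_nonneg _) (norm_nonneg _)).mp h.symm

private lemma norm_mul_unitary {n : Type*} [Fintype n] [DecidableEq n]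
    (V X : Matrix n n ℂ) (hV : V * Vᴴ = 1) : ‖X * V‖ = ‖X‖ := by
  have h : Vᴴᴴ * Vᴴ = 1 := by rwa [conjTranspose_conjTranspose]
  calc ‖X * V‖ = ‖(X * V)ᴴ‖ := (Matrix.l2_opNorm_conjTranspose _).symm
    _ = ‖Vᴴ * Xᴴ‖ := by rw [conjTranspose_mul]
    _ = ‖Xᴴ‖ := unitary_mul_norm _ _ h
    _ = ‖X‖ := Matrix.l2_opNorm_conjTranspose _

/-- **Robust oblivious amplitude amplification error bound.** If `A` is `ε`-close (in `L2`
operator norm) to a unitary `U` with `0 ≤ ε ≤ 3/10`, then one round of robust oblivious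
amplitude amplification, `A ↦ (3/2)A − (1/2)AAᴴA`, is `(5/2)ε`-close to `U`. -/
theorem robust_oblivious_amplitude_amplification_error
    (n : Type*) [Fintype n] [DecidableEq n]
    (U A : Matrix n n ℂ) (hU : Uᴴ * U = 1)
    (ε : ℝ) (hε0 : 0 ≤ ε) (hε1 : ε ≤ 3 / 10)
    (hA : ‖A - U‖ ≤ ε) :
    ‖(3/2 : ℂ) • A - (1/2 : ℂ) • (A * Aᴴ * A) - U‖ ≤ (5/2) * ε := by
  obtain ⟨E, hAeq⟩ : ∃ E, A = U + E := ⟨A - U, by abel⟩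
  have hEA : ‖E‖ ≤ ε := by rwa [hAeq, add_sub_cancel_left] at hA
  subst hAeq
  have hUU : U * Uᴴ = 1 := mul_eq_one_comm.mp hU
  have key : (3/2 : ℂ) • (U + E) - (1/2 : ℂ) • ((U + E) * (U + E)ᴴ * (U + E)) - U =
      (1/2 : ℂ) • E - (1/2 : ℂ) •
        (U * Eᴴ * U + U * Eᴴ * E + E * Uᴴ * E + E * Eᴴ * U + E * Eᴴ * E) := by
    simp only [conjTranspose_add, Matrix.add_mul, Matrix.mul_add, smul_add, smul_sub]
    have h1 : U * Uᴴ * U = U := by rw [hUU, Matrix.one_mul]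
    have h2 : U * Uᴴ * E = E := by rw [hUU, Matrix.one_mul]
    have h3 : E * Uᴴ * U = E := by rw [Matrix.mul_assoc, hU, Matrix.mul_one]
    rw [h1, h2, h3]
    module
  rw [key]
  have hEc : ‖Eᴴ‖ = ‖E‖ := Matrix.l2_opNorm_conjTranspose E
  have hEn : (0:ℝ) ≤ ‖E‖ := norm_nonneg E
  have b1 : ‖U * Eᴴ * U‖ = ‖E‖ := by
    rw [norm_mul_unitary _ _ hUU, unitary_mul_norm _ _ hU, hEc]
  have b2 : ‖U * Eᴴ * E‖ ≤ ‖E‖ * ‖E‖ :=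
    calc ‖U * Eᴴ * E‖ ≤ ‖U * Eᴴ‖ * ‖E‖ := norm_mul_le _ _
    _ = ‖E‖ * ‖E‖ := by rw [unitary_mul_norm _ _ hU, hEc]
  have b3 : ‖E * Uᴴ * E‖ ≤ ‖E‖ * ‖E‖ :=
    calc ‖E * Uᴴ * E‖ ≤ ‖E * Uᴴ‖ * ‖E‖ := norm_mul_le _ _
    _ = ‖E‖ * ‖E‖ := by
        rw [norm_mul_unitary _ _ (by rwa [conjTranspose_conjTranspose] : Uᴴ * Uᴴᴴ = 1)]
  have b4 : ‖E * Eᴴ * U‖ ≤ ‖E‖ * ‖E‖ :=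
    calc ‖E * Eᴴ * U‖ = ‖E * Eᴴ‖ := norm_mul_unitary _ _ hUU
    _ ≤ ‖E‖ * ‖Eᴴ‖ := norm_mul_le _ _
    _ = ‖E‖ * ‖E‖ := by rw [hEc]
  have b5 : ‖E * Eᴴ * E‖ ≤ ‖E‖ * ‖E‖ * ‖E‖ :=
    calc ‖E * Eᴴ * E‖ ≤ ‖E * Eᴴ‖ * ‖E‖ := norm_mul_le _ _
    _ ≤ ‖E‖ * ‖Eᴴ‖ * ‖E‖ := by gcongr; exact norm_mul_le _ _
    _ = ‖E‖ * ‖E‖ * ‖E‖ := by rw [hEc]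
  have hhalf : ‖(1/2 : ℂ)‖ = 1/2 := by norm_num
  have bsum : ‖U * Eᴴ * U + U * Eᴴ * E + E * Uᴴ * E + E * Eᴴ * U + E * Eᴴ * E‖ ≤
      ‖E‖ + 3 * (‖E‖ * ‖E‖) + ‖E‖ * ‖E‖ * ‖E‖ := by
    calc _ ≤ ‖U * Eᴴ * U + U * Eᴴ * E + E * Uᴴ * E + E * Eᴴ * U‖ + ‖E * Eᴴ * E‖ :=
          norm_add_le _ _
    _ ≤ ‖U * Eᴴ * U + U * Eᴴ * E + E * Uᴴ * E‖ + ‖E * Eᴴ * U‖ + ‖E * Eᴴ * E‖ := by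
          gcongr; exact norm_add_le _ _
    _ ≤ ‖U * Eᴴ * U + U * Eᴴ * E‖ + ‖E * Uᴴ * E‖ + ‖E * Eᴴ * U‖ + ‖E * Eᴴ * E‖ := by
          gcongr; exact norm_add_le _ _
    _ ≤ ‖U * Eᴴ * U‖ + ‖U * Eᴴ * E‖ + ‖E * Uᴴ * E‖ + ‖E * Eᴴ * U‖ + ‖E * Eᴴ * E‖ := by
          gcongr; exact norm_add_le _ _
    _ ≤ ‖E‖ + 3 * (‖E‖ * ‖E‖) + ‖E‖ * ‖E‖ * ‖E‖ := by linarith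
  calc ‖(1/2 : ℂ) • E - (1/2 : ℂ) •
        (U * Eᴴ * U + U * Eᴴ * E + E * Uᴴ * E + E * Eᴴ * U + E * Eᴴ * E)‖
      ≤ ‖(1/2 : ℂ) • E‖ + ‖(1/2 : ℂ) •
        (U * Eᴴ * U + U * Eᴴ * E + E * Uᴴ * E + E * Eᴴ * U + E * Eᴴ * E)‖ :=
        norm_sub_le _ _
    _ = (1/2) * ‖E‖ + (1/2) * ‖U * Eᴴ * U + U * Eᴴ * E + E * Uᴴ * E + E * Eᴴ * U + E * Eᴴ * E‖ := by
        rw [norm_smul, norm_smul, hhalf]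
    _ ≤ (1/2) * ‖E‖ + (1/2) * (‖E‖ + 3 * (‖E‖ * ‖E‖) + ‖E‖ * ‖E‖ * ‖E‖) := by gcongr
    _ ≤ (5/2) * ε := by nlinarith
end

section
/- Let n be a finite type, let H : Matrix n n ℂ be Hermitian, let α > 0 be real, and suppose the matrix 1 − (α⁻¹ • H) * (α⁻¹ • H) is positive semidefinite. Let S be its positive semidefinite square root. Then the block matrix Matrix.fromBlocks (α⁻¹ • H) S S (−(α⁻¹ • H)) is unitary. (This is the standard one-ancilla unitary dilation [[H/α, √(I − H²/α²)],[√(I − H²/α²), −H/α]] used to block-encode H/α.) -/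
open Matrix
open scoped ComplexOrder

/-- The positive semidefinite square root of a positive semidefinite matrix
(the definition `Matrix.PosSemidef.sqrt` of the older Mathlib, since removed). -/
noncomputable def Matrix.PosSemidef.sqrt {n : Type*} [Fintype n] [DecidableEq n] {𝕜 : Type*} [RCLike 𝕜]
    {A : Matrix n n 𝕜} (hA : A.PosSemidef) : Matrix n n 𝕜 :=
  hA.1.eigenvectorUnitary.1 * diagonal ((↑) ∘ (√·) ∘ hA.1.eigenvalues) *
    (star hA.1.eigenvectorUnitary : Matrix n n 𝕜)

private lemma sqrt_herm_aux {n : Type*} [Fintype n] [DecidableEq n]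
    {M : Matrix n n ℂ} (hM : M.PosSemidef) : (hM.sqrt)ᴴ = hM.sqrt := by
  unfold Matrix.PosSemidef.sqrt
  rw [conjTranspose_mul, conjTranspose_mul, diagonal_conjTranspose]
  simp [Matrix.star_eq_conjTranspose, Matrix.mul_assoc]
  congr 3
  funext i
  simp

private lemma sqrt_mul_self_aux {n : Type*} [Fintype n] [DecidableEq n]
    {M : Matrix n n ℂ} (hM : M.PosSemidef) : hM.sqrt * hM.sqrt = M := by
  unfold Matrix.PosSemidef.sqrt
  set U : Matrix n n ℂ := (hM.1.eigenvectorUnitary : Matrix n n ℂ) with hU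
  have hUU' : star U * U = 1 := (Matrix.mem_unitaryGroup_iff').mp hM.1.eigenvectorUnitary.2
  set D : Matrix n n ℂ := diagonal (RCLike.ofReal ∘ (√·) ∘ hM.1.eigenvalues) with hD
  have e : U * D * star U * (U * D * star U) = U * (D * D) * star U := by
    rw [show U * D * star U * (U * D * star U) = U * D * (star U * U) * D * star U by
      noncomm_ring, hUU']
    noncomm_ring
  rw [e, hD, diagonal_mul_diagonal]
  conv_rhs => rw [hM.1.spectral_theorem]
  congr 2
  congr 1
  funext i
  simp only [Function.comp_apply]
  rw [← RCLike.ofReal_mul, Real.mul_self_sqrt (hM.eigenvalues_nonneg i)]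

private lemma commute_sqrt_of_commute {n : Type*} [Fintype n] [DecidableEq n]
    {M B : Matrix n n ℂ} (hM : M.PosSemidef) (hBM : B * M = M * B) :
    B * hM.sqrt = hM.sqrt * B := by
  set U : Matrix n n ℂ := (hM.1.eigenvectorUnitary : Matrix n n ℂ) with hU
  have hUU : U * star U = 1 := (Matrix.mem_unitaryGroup_iff).mp hM.1.eigenvectorUnitary.2
  have hUU' : star U * U = 1 := (Matrix.mem_unitaryGroup_iff').mp hM.1.eigenvectorUnitary.2
  set d : n → ℝ := hM.1.eigenvalues with hd
  have hspec : M = U * diagonal (RCLike.ofReal ∘ d) * star U := hM.1.spectral_theorem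
  set C : Matrix n n ℂ := star U * B * U with hC
  have hCd : C * diagonal (RCLike.ofReal ∘ d) = diagonal (RCLike.ofReal ∘ d) * C := by
    have h1 : diagonal (RCLike.ofReal ∘ d) = star U * M * U := by
      rw [hspec]
      calc diagonal (RCLike.ofReal ∘ d)
          = 1 * diagonal (RCLike.ofReal ∘ d) * 1 := by noncomm_ring
        _ = (star U * U) * diagonal (RCLike.ofReal ∘ d) * (star U * U) := by
            rw [hUU']
        _ = star U * (U * diagonal (RCLike.ofReal ∘ d) * star U) * U := by noncomm_ring
    rw [h1, hC]
    calc star U * B * U * (star U * M * U)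
        = star U * B * (U * star U) * M * U := by noncomm_ring
      _ = star U * (B * M) * U := by rw [hUU]; noncomm_ring
      _ = star U * (M * B) * U := by rw [hBM]
      _ = star U * M * (U * star U) * B * U := by rw [hUU]; noncomm_ring
      _ = star U * M * U * (star U * B * U) := by noncomm_ring
  have hCs : C * diagonal (RCLike.ofReal ∘ Real.sqrt ∘ d)
      = diagonal (RCLike.ofReal ∘ Real.sqrt ∘ d) * C := by
    ext i j
    have h2 := congrFun (congrFun hCd i) j
    simp only [Matrix.mul_diagonal, Matrix.diagonal_mul, Function.comp_apply] at h2 ⊢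
    by_cases hij : d i = d j
    · rw [hij, mul_comm]
    · have h0 : C i j * ((RCLike.ofReal (d j) : ℂ) - RCLike.ofReal (d i)) = 0 := by
        rw [mul_sub]; linear_combination h2
      have hz : C i j = 0 := by
        rcases mul_eq_zero.mp h0 with h | h
        · exact h
        · exact absurd (by exact_mod_cast sub_eq_zero.mp h : d j = d i) (fun e => hij e.symm)
      simp [hz]
  have hsqrt : hM.sqrt = U * diagonal (RCLike.ofReal ∘ Real.sqrt ∘ d) * star U := rfl
  have hB : B = U * C * star U := by
    rw [hC]
    calc B = 1 * B * 1 := by noncomm_ring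
      _ = (U * star U) * B * (U * star U) := by rw [hUU]
      _ = U * (star U * B * U) * star U := by noncomm_ring
  rw [hsqrt]
  calc B * (U * diagonal (RCLike.ofReal ∘ Real.sqrt ∘ d) * star U)
      = U * C * (star U * U) * diagonal (RCLike.ofReal ∘ Real.sqrt ∘ d) * star U := by
        rw [hB]; noncomm_ring
    _ = U * (C * diagonal (RCLike.ofReal ∘ Real.sqrt ∘ d)) * star U := by
        rw [hUU']; noncomm_ring
    _ = U * (diagonal (RCLike.ofReal ∘ Real.sqrt ∘ d) * C) * star U := by rw [hCs]
    _ = U * diagonal (RCLike.ofReal ∘ Real.sqrt ∘ d) * star U * (U * C * star U) := by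
        have e : U * diagonal (RCLike.ofReal ∘ Real.sqrt ∘ d) * star U * (U * C * star U)
            = U * diagonal (RCLike.ofReal ∘ Real.sqrt ∘ d) * (star U * U) * C * star U := by
          noncomm_ring
        rw [e, hUU']; noncomm_ring
    _ = U * diagonal (RCLike.ofReal ∘ Real.sqrt ∘ d) * star U * B := by rw [← hB]

/-- **One-ancilla unitary dilation.** For a Hermitian matrix `H` and `α > 0` such that
`1 − (H/α)² ⪰ 0` with positive semidefinite square root `S`, the block matrix
`[[H/α, S], [S, −H/α]]` is unitary. -/
theorem unitary_dilation_block_encoding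
    (n : Type*) [Fintype n] [DecidableEq n]
    (H : Matrix n n ℂ) (hH : H.IsHermitian)
    (α : ℝ) (hα : 0 < α)
    (hPSD : (1 - ((α : ℂ)⁻¹ • H) * ((α : ℂ)⁻¹ • H)).PosSemidef) :
    (Matrix.fromBlocks ((α : ℂ)⁻¹ • H) hPSD.sqrt hPSD.sqrt (-((α : ℂ)⁻¹ • H)))ᴴ *
        Matrix.fromBlocks ((α : ℂ)⁻¹ • H) hPSD.sqrt hPSD.sqrt (-((α : ℂ)⁻¹ • H)) = 1 := by
  set A : Matrix n n ℂ := (α : ℂ)⁻¹ • H with hA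
  set S : Matrix n n ℂ := hPSD.sqrt with hS
  have hAH : Aᴴ = A := by
    rw [hA, conjTranspose_smul, hH.eq]
    congr 1
    simp [Complex.ext_iff]
  have hSH : Sᴴ = S := sqrt_herm_aux hPSD
  have hSS : S * S = 1 - A * A := sqrt_mul_self_aux hPSD
  have hcomm : A * S = S * A :=
    commute_sqrt_of_commute hPSD (by noncomm_ring)
  rw [fromBlocks_conjTranspose, hAH, hSH, conjTranspose_neg, hAH, fromBlocks_multiply]
  rw [show A * A + S * S = 1 by rw [hSS]; noncomm_ring]
  rw [show A * S + S * -A = 0 by rw [hcomm]; noncomm_ring]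
  rw [show S * A + -A * S = 0 by rw [← hcomm]; noncomm_ring]
  rw [show S * S + -A * -A = 1 by rw [hSS]; noncomm_ring]
  exact fromBlocks_one
end

section
/- For every real τ > 0 and every real ε with 0 < ε < 1, there exists a unique real number r with τ < r such that (τ / r) ^ r = ε (real exponentiation). (This is the well-definedness of the function r(τ, ε), defined implicitly by ε = (τ/r)^r with r ∈ (τ, ∞), which governs the truncation index of the Jacobi–Anger expansion.) -/
/-- **Well-definedness of `r(τ, ε)`.** For every `τ > 0` and `0 < ε < 1` there is a unique
real `r > τ` with `(τ / r) ^ r = ε`. -/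
theorem r_tau_eps_exists_unique (τ ε : ℝ) (hτ : 0 < τ) (hε0 : 0 < ε) (hε1 : ε < 1) :
    ∃! r : ℝ, τ < r ∧ (τ / r) ^ r = ε := by
  set g : ℝ → ℝ := fun r => r * Real.log τ - r * Real.log r with hg
  -- for r > 0, r * log (τ/r) = g r
  have hgl : ∀ r : ℝ, 0 < r → r * Real.log (τ / r) = g r := by
    intro r hr
    simp [hg, Real.log_div hτ.ne' hr.ne', mul_sub]
  have hcont : Continuous g := by
    exact (continuous_id.mul continuous_const).sub Real.continuous_mul_log
  -- g is strictly antitone on [τ, ∞)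
  have hanti : StrictAntiOn g (Set.Ici τ) := by
    apply strictAntiOn_of_deriv_neg (convex_Ici τ) hcont.continuousOn
    intro x hx
    rw [interior_Ici] at hx
    have hx0 : (0:ℝ) < x := hτ.trans hx
    have hd : HasDerivAt g (1 * Real.log τ - (Real.log x + 1)) x :=
      ((hasDerivAt_id x).mul_const (Real.log τ)).sub (Real.hasDerivAt_mul_log hx0.ne')
    rw [hd.deriv]
    have : Real.log τ ≤ Real.log x := Real.log_le_log hτ hx.le
    linarith
  have hgτ : g τ = 0 := by simp [hg]
  -- choose large R with g R ≤ log ε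
  set R : ℝ := max (Real.exp 1 * τ) (-Real.log ε) with hR
  have hRτ : τ < R := by
    have h1 : (1:ℝ) < Real.exp 1 := by
      have := Real.exp_one_gt_d9; linarith
    have : τ < Real.exp 1 * τ := by nlinarith
    exact this.trans_le (le_max_left _ _)
  have hR0 : 0 < R := hτ.trans hRτ
  have hgR : g R ≤ Real.log ε := by
    have h1 : τ / R ≤ Real.exp (-1) := by
      rw [div_le_iff₀ hR0, Real.exp_neg]
      have hE : Real.exp 1 * τ ≤ R := le_max_left _ _
      have hE1 : (0:ℝ) < Real.exp 1 := Real.exp_pos 1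
      calc τ = (Real.exp 1)⁻¹ * (Real.exp 1 * τ) := by field_simp
        _ ≤ (Real.exp 1)⁻¹ * R := by
            apply mul_le_mul_of_nonneg_left hE (by positivity)
    have h2 : Real.log (τ / R) ≤ -1 := by
      have := Real.log_le_log (by positivity) h1
      simpa [Real.log_exp] using this
    have h3 : R * Real.log (τ / R) ≤ R * (-1) :=
      mul_le_mul_of_nonneg_left h2 hR0.le
    rw [hgl R hR0] at h3
    have h4 : -Real.log ε ≤ R := le_max_right _ _
    linarith
  have hlogε : Real.log ε < 0 := Real.log_neg hε0 hε1
  -- IVT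
  have hIVT : Real.log ε ∈ g '' Set.Icc τ R := by
    apply intermediate_value_Icc' hRτ.le hcont.continuousOn
    constructor
    · exact hgR
    · rw [hgτ]; exact hlogε.le
  obtain ⟨r, hrmem, hgr⟩ := hIVT
  have hrτ : τ < r := by
    rcases lt_or_eq_of_le hrmem.1 with h | h
    · exact h
    · exfalso; rw [← h, hgτ] at hgr; linarith
  have hr0 : 0 < r := hτ.trans hrτ
  have key : ∀ s : ℝ, τ < s → ((τ / s) ^ s = ε ↔ g s = Real.log ε) := by
    intro s hs
    have hs0 : 0 < s := hτ.trans hs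
    have hb : 0 < τ / s := by positivity
    rw [Real.rpow_def_of_pos hb, mul_comm (Real.log (τ / s)) s, hgl s hs0]
    constructor
    · intro h; rw [← h, Real.log_exp]
    · intro h; rw [h, Real.exp_log hε0]
  refine ⟨r, ⟨hrτ, (key r hrτ).2 hgr⟩, ?_⟩
  rintro s ⟨hsτ, hsε⟩
  have hgs : g s = Real.log ε := (key s hsτ).1 hsε
  exact hanti.injOn (Set.mem_Ici.2 hsτ.le) (Set.mem_Ici.2 hrτ.le) (by rw [hgs, hgr])
end
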